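/- Let G, B be real symmetric matrices with common null space span{𝟙} and rank n-1, with G positive definite on 𝟙ᗮ. Then (G + B G† B)† · B G† = (B + G B† G)† whenever B is also invertible on 𝟙ᗮ. -/

import Mathlib

/-!
The matrices `G`, `B` and `R = G + B G† B` are symmetric with kernel `span 𝟙` (for `R` because
`G` and `G†` are positive semidefinite, so `R v = 0` forces `vᵀ G v = 0`). Hence they share the
orthogonal range projector `P = G† G`, and each is inverted by its pseudoinverse on `𝟙ᗮ`.
Since `G B† R = B + G B† G`, the products of `B + G B† G` with `R† B G†` in either order equal
`P`, so `R† B G†` satisfies the Penrose conditions for `B + G B† G`.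
-/

open Matrix

/-- `Ad` is the Moore–Penrose pseudoinverse of `A` (the four Penrose conditions). -/
def IsMoorePenrose {n : ℕ} (A Ad : Matrix (Fin n) (Fin n) ℝ) : Prop :=
  A * Ad * A = A ∧ Ad * A * Ad = Ad ∧ (A * Ad)ᵀ = A * Ad ∧ (Ad * A)ᵀ = Ad * A

namespace Matrix

variable {ι : Type*} [Fintype ι]

lemma PosSemidef.mulVec_eq_zero_of_add_mulVec_eq_zero {A B : Matrix ι ι ℝ}
    (hA : A.PosSemidef) (hB : B.PosSemidef) {v : ι → ℝ} (hv : (A + B) *ᵥ v = 0) :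
    A *ᵥ v = 0 := by
  have hsum : star v ⬝ᵥ (A *ᵥ v) + star v ⬝ᵥ (B *ᵥ v) = 0 := by
    rw [← dotProduct_add, ← add_mulVec, hv, dotProduct_zero]
  have hAv := hA.dotProduct_mulVec_nonneg v
  have hBv := hB.dotProduct_mulVec_nonneg v
  exact (hA.dotProduct_mulVec_zero_iff v).mp (by linarith)

/-- Subtracting the mean reduces the quadratic form of `G` to sum-zero vectors. -/
lemma posSemidef_of_nonneg_of_sum_eq_zero {G : Matrix ι ι ℝ} (hG : G.IsSymm)
    (hG1 : G *ᵥ (fun _ => 1) = 0) (hpos : ∀ v : ι → ℝ, ∑ i, v i = 0 → 0 ≤ v ⬝ᵥ (G *ᵥ v)) :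
    G.PosSemidef := by
  refine PosSemidef.of_dotProduct_mulVec_nonneg
    ((conjTranspose_eq_transpose_of_trivial G).trans hG) fun v => ?_
  set c := (∑ i, v i) / Fintype.card ι
  set u := v - c • (fun _ => (1 : ℝ))
  have hu : ∑ i, u i = 0 := by
    rcases isEmpty_or_nonempty ι with _ | _
    · simp
    · have hcard : (Fintype.card ι : ℝ) ≠ 0 := by positivity
      simp [u, c, Finset.sum_sub_distrib, mul_div_cancel₀, hcard]
  have hGu : G *ᵥ u = G *ᵥ v := by
    rw [mulVec_sub, mulVec_smul, hG1, smul_zero, sub_zero]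
  have h1G : (fun _ => (1 : ℝ)) ⬝ᵥ (G *ᵥ v) = 0 := by
    rw [dotProduct_mulVec, ← mulVec_transpose, hG, hG1, zero_dotProduct]
  have := hpos u hu
  rwa [hGu, sub_dotProduct, smul_dotProduct, h1G, smul_zero, sub_zero] at this

end Matrix

namespace IsMoorePenrose

variable {n : ℕ} {A Ad : Matrix (Fin n) (Fin n) ℝ}

theorem unique {Ad' : Matrix (Fin n) (Fin n) ℝ} (h : IsMoorePenrose A Ad)
    (h' : IsMoorePenrose A Ad') : Ad = Ad' := by
  obtain ⟨h1, h2, h3, h4⟩ := h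
  obtain ⟨h1', h2', h3', h4'⟩ := h'
  have hAAd : A * Ad = A * Ad' :=
    calc A * Ad = (A * Ad' * A * Ad)ᵀ := by rw [h1', h3]
      _ = (A * Ad) * (A * Ad') := by rw [mul_assoc, transpose_mul, h3, h3']
      _ = A * Ad' := by rw [← mul_assoc, h1]
  have hAdA : Ad * A = Ad' * A :=
    calc Ad * A = (Ad * A) * (Ad' * A) := by rw [mul_assoc Ad, ← mul_assoc A, h1']
      _ = (Ad' * A * Ad * A)ᵀ := by rw [mul_assoc (Ad' * A), transpose_mul, h4, h4']
      _ = Ad' * A := by rw [mul_assoc Ad' A Ad, mul_assoc Ad' (A * Ad) A, h1, h4']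
  calc Ad = Ad * A * Ad := h2.symm
    _ = Ad' := by rw [hAdA, mul_assoc, hAAd, ← mul_assoc, h2']

theorem transpose (h : IsMoorePenrose A Ad) : IsMoorePenrose Aᵀ Adᵀ := by
  obtain ⟨h1, h2, h3, h4⟩ := h
  refine ⟨?_, ?_, ?_, ?_⟩
  · rw [← transpose_mul, ← transpose_mul, ← mul_assoc, h1]
  · rw [← transpose_mul, ← transpose_mul, ← mul_assoc, h2]
  · rw [← transpose_mul, h4, h4]
  · rw [← transpose_mul, h3, h3]

theorem transpose_eq_of_isSymm (hA : A.IsSymm) (h : IsMoorePenrose A Ad) : Adᵀ = Ad := by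
  have hT := h.transpose
  rw [hA.eq] at hT
  exact hT.unique h

theorem mul_comm_of_isSymm (hA : A.IsSymm) (h : IsMoorePenrose A Ad) : A * Ad = Ad * A := by
  rw [← h.2.2.1, transpose_mul, h.transpose_eq_of_isSymm hA, hA.eq]

theorem posSemidef (hA : A.PosSemidef) (h : IsMoorePenrose A Ad) : Ad.PosSemidef := by
  have hAd : Adᴴ = Ad := by
    rw [conjTranspose_eq_transpose_of_trivial]
    exact h.transpose_eq_of_isSymm ((conjTranspose_eq_transpose_of_trivial A).symm.trans hA.1)
  simpa only [hAd, h.2.1] using hA.conjTranspose_mul_mul_same Ad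

theorem mul_pinv_mul_of_ker_le {m : Type*} (h : IsMoorePenrose A Ad) {M : Matrix m (Fin n) ℝ}
    (hM : ∀ v, A *ᵥ v = 0 → M *ᵥ v = 0) : M * (Ad * A) = M := by
  refine ext_iff_mulVec.mpr fun v => ?_
  have hker : A *ᵥ (v - (Ad * A) *ᵥ v) = 0 := by
    rw [mulVec_sub, mulVec_mulVec, ← mul_assoc, h.1, sub_self]
  have := hM _ hker
  rwa [mulVec_sub, mulVec_mulVec, sub_eq_zero, eq_comm] at this

theorem pinv_mul_eq_of_ker_iff {A' Ad' : Matrix (Fin n) (Fin n) ℝ} (h : IsMoorePenrose A Ad)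
    (h' : IsMoorePenrose A' Ad') (hker : ∀ v, A *ᵥ v = 0 ↔ A' *ᵥ v = 0) :
    Ad * A = Ad' * A' := by
  have hPQ : (Ad * A) * (Ad' * A') = Ad * A := h'.mul_pinv_mul_of_ker_le fun v hv => by
    rw [← mulVec_mulVec, (hker v).mpr hv, mulVec_zero]
  have hQP : (Ad' * A') * (Ad * A) = Ad' * A' := h.mul_pinv_mul_of_ker_le fun v hv => by
    rw [← mulVec_mulVec, (hker v).mp hv, mulVec_zero]
  calc Ad * A = ((Ad' * A') * (Ad * A))ᵀ := by rw [transpose_mul, h.2.2.2, h'.2.2.2, hPQ]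
    _ = Ad' * A' := by rw [hQP, h'.2.2.2]

end IsMoorePenrose

section

variable {n : ℕ} {G B Gd : Matrix (Fin n) (Fin n) ℝ}

theorem IsMoorePenrose.mulVec_add_mul_mul_eq_zero_iff (hG : G.PosSemidef)
    (hGd : IsMoorePenrose G Gd) (hB : B.IsSymm) (hker : ∀ v, G *ᵥ v = 0 → B *ᵥ v = 0)
    (v : Fin n → ℝ) : (G + B * Gd * B) *ᵥ v = 0 ↔ G *ᵥ v = 0 := by
  refine ⟨fun hv => hG.mulVec_eq_zero_of_add_mulVec_eq_zero ?_ hv, fun hv => ?_⟩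
  · simpa only [conjTranspose_eq_transpose_of_trivial, hB.eq] using
      (hGd.posSemidef hG).conjTranspose_mul_mul_same B
  · rw [add_mulVec, hv, ← mulVec_mulVec, hker v hv, mulVec_zero, zero_add]

theorem IsMoorePenrose.add_mul_mul_of_range_proj_eq {Bd Rd P : Matrix (Fin n) (Fin n) ℝ}
    (hG : IsMoorePenrose G Gd) (hB : IsMoorePenrose B Bd)
    (hR : IsMoorePenrose (G + B * Gd * B) Rd)
    (hGP : G * Gd = P ∧ Gd * G = P) (hBP : B * Bd = P ∧ Bd * B = P)
    (hRP : (G + B * Gd * B) * Rd = P ∧ Rd * (G + B * Gd * B) = P) :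
    IsMoorePenrose (B + G * Bd * G) (Rd * (B * Gd)) := by
  set R := G + B * Gd * B with hR_def
  have hPt : Pᵀ = P := hGP.2 ▸ hG.2.2.2
  have hGP' : G * P = G := by rw [← hGP.2, ← mul_assoc, hG.1]
  have hPG : P * G = G := by rw [← hGP.1, hG.1]
  have hPB : P * B = B := by rw [← hBP.1, hB.1]
  have hBP' : B * P = B := by rw [← hBP.2, ← mul_assoc, hB.1]
  have hBdP : Bd * P = Bd := by rw [← hBP.1, ← mul_assoc, hB.2.1]
  have hRdP : Rd * P = Rd := by rw [← hRP.1, ← mul_assoc, hR.2.1]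
  have hPRd : P * Rd = Rd := by rw [← hRP.2, hR.2.1]
  have hX : G * Bd * R = B + G * Bd * G := calc
    G * Bd * R = G * (Bd * B) * Gd * B + G * Bd * G := by
      simp only [hR_def, mul_add, mul_assoc, add_comm]
    _ = B + G * Bd * G := by rw [hBP.2, hGP', hGP.1, hPB]
  have hXY : (B + G * Bd * G) * (Rd * (B * Gd)) = P := calc
    _ = G * (Bd * (R * Rd)) * B * Gd := by rw [← hX]; simp only [mul_assoc]
    _ = G * (Bd * B) * Gd := by rw [hRP.1, hBdP, mul_assoc G Bd B]
    _ = P := by rw [hBP.2, hGP', hGP.1]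
  have hYX : (Rd * (B * Gd)) * (B + G * Bd * G) = P := calc
    _ = Rd * (B * (Gd * G)) * Bd * R := by rw [← hX]; simp only [mul_assoc]
    _ = Rd * (B * Bd) * R := by rw [hGP.2, hBP', mul_assoc Rd B Bd]
    _ = P := by rw [hBP.1, hRdP, hRP.2]
  have hPX : P * (B + G * Bd * G) = B + G * Bd * G := by
    rw [mul_add, hPB, ← mul_assoc, ← mul_assoc, hPG]
  exact ⟨by rw [hXY, hPX], by rw [hYX, ← mul_assoc, hPRd], by rw [hXY, hPt], by rw [hYX, hPt]⟩

end

theorem resistance_reactance_pinv_identity_general {n : ℕ}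
    (G B Gd Bd Rd Xd : Matrix (Fin n) (Fin n) ℝ)
    (hGsymm : G.IsSymm) (hBsymm : B.IsSymm)
    (hGker : ∀ v : Fin n → ℝ, G *ᵥ v = 0 ↔ ∃ c : ℝ, v = fun _ => c)
    (hBker : ∀ v : Fin n → ℝ, B *ᵥ v = 0 ↔ ∃ c : ℝ, v = fun _ => c)
    (hGpos : ∀ v : Fin n → ℝ, v ≠ 0 → (∑ i, v i) = 0 → 0 < v ⬝ᵥ (G *ᵥ v))
    (hGd : IsMoorePenrose G Gd) (hBd : IsMoorePenrose B Bd)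
    (hRd : IsMoorePenrose (G + B * Gd * B) Rd)
    (hXd : IsMoorePenrose (B + G * Bd * G) Xd) :
    Rd * (B * Gd) = Xd := by
  have hG_psd : G.PosSemidef := by
    refine posSemidef_of_nonneg_of_sum_eq_zero hGsymm ((hGker _).mpr ⟨1, rfl⟩) fun v hv => ?_
    rcases eq_or_ne v 0 with rfl | hv0
    · simp
    · exact (hGpos v hv0 hv).le
  have hBG : ∀ v, B *ᵥ v = 0 ↔ G *ᵥ v = 0 := fun v => (hBker v).trans (hGker v).symm
  have hRG := hGd.mulVec_add_mul_mul_eq_zero_iff hG_psd hBsymm fun v => (hBG v).mpr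
  have hR_symm : (G + B * Gd * B).IsSymm := by
    simp only [IsSymm, transpose_add, transpose_mul, hGsymm.eq, hBsymm.eq,
      hGd.transpose_eq_of_isSymm hGsymm, mul_assoc]
  have hBP := hBd.pinv_mul_eq_of_ker_iff hGd hBG
  have hRP := hRd.pinv_mul_eq_of_ker_iff hGd hRG
  exact (hGd.add_mul_mul_of_range_proj_eq hBd hRd ⟨hGd.mul_comm_of_isSymm hGsymm, rfl⟩
    ⟨(hBd.mul_comm_of_isSymm hBsymm).trans hBP, hBP⟩
    ⟨(hRd.mul_comm_of_isSymm hR_symm).trans hRP, hRP⟩).unique hXd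

theorem resistance_reactance_pinv_identity {n : ℕ} (hn : 1 ≤ n)
    (G B Gd Bd Rd Xd : Matrix (Fin n) (Fin n) ℝ)
    (hGsymm : G.IsSymm) (hBsymm : B.IsSymm)
    (hGrank : G.rank = n - 1) (hBrank : B.rank = n - 1)
    (hGker : ∀ v : Fin n → ℝ, G *ᵥ v = 0 ↔ ∃ c : ℝ, v = fun _ => c)
    (hBker : ∀ v : Fin n → ℝ, B *ᵥ v = 0 ↔ ∃ c : ℝ, v = fun _ => c)
    (hGpos : ∀ v : Fin n → ℝ, v ≠ 0 → (∑ i, v i) = 0 → 0 < v ⬝ᵥ (G *ᵥ v))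
    (hGd : IsMoorePenrose G Gd) (hBd : IsMoorePenrose B Bd)
    (hRd : IsMoorePenrose (G + B * Gd * B) Rd)
    (hXd : IsMoorePenrose (B + G * Bd * G) Xd) :
    Rd * (B * Gd) = Xd :=
  resistance_reactance_pinv_identity_general G B Gd Bd Rd Xd hGsymm hBsymm hGker hBker hGpos hGd hBd
    hRd hXd
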